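/- Let S ⊆ Z_2^n be a subspace of dimension r, let ℓ ≥ 1, and let S' ⊇ S have dimension r + ℓ. Suppose vectors v_1, ..., v_s are sampled sequentially where v_z is uniform in Z_2^n \ span(S ∪ {v_1, ..., v_{z−1}}). Then the probability that span(v_1, ..., v_s) ∩ S' ≠ {0} is less than 2^{−(n−ℓ−r−s)}. -/
import Mathlib

namespace Stmt9

open Submodule Finset

attribute [local instance] Classical.propDecidable

noncomputable instance (priority := 2000) instFinSub {α : Type*} [Finite α] (p : α → Prop) :
    Fintype {x // p x} := Fintype.ofFinite _

variable {n : ℕ}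

abbrev V (n : ℕ) := Fin n → ZMod 2

def earlier {m : ℕ} (f : Fin m → V n) (z : Fin m) : Set (V n) := {x | ∃ i, i < z ∧ f i = x}

def Good (T : Submodule (ZMod 2) (V n)) {m : ℕ} (f : Fin m → V n) : Prop :=
  ∀ z, f z ∉ T ⊔ span (ZMod 2) (earlier f z)

def Bad (T' : Submodule (ZMod 2) (V n)) {m : ℕ} (f : Fin m → V n) : Prop :=
  ∃ z, f z ∈ T' ⊔ span (ZMod 2) (earlier f z)

lemma earlier_zero {m : ℕ} (f : Fin (m + 1) → V n) : earlier f 0 = ∅ := by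
  ext x
  simp only [earlier, Set.mem_setOf_eq, Set.mem_empty_iff_false, iff_false]
  rintro ⟨i, hi, -⟩
  exact absurd hi (by simp [Fin.not_lt, Fin.zero_le])

lemma earlier_succ {m : ℕ} (f : Fin (m + 1) → V n) (z : Fin m) :
    earlier f z.succ = insert (f 0) (earlier (Fin.tail f) z) := by
  ext x
  constructor
  · rintro ⟨i, hi, rfl⟩
    induction i using Fin.cases with
    | zero => exact Set.mem_insert _ _
    | succ j => exact Set.mem_insert_of_mem _ ⟨j, Fin.succ_lt_succ_iff.mp hi, rfl⟩
  · rintro (rfl | ⟨j, hj, rfl⟩)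
    · exact ⟨0, Fin.succ_pos z, rfl⟩
    · exact ⟨j.succ, Fin.succ_lt_succ_iff.mpr hj, rfl⟩

lemma sup_span_earlier_zero (T : Submodule (ZMod 2) (V n)) {m : ℕ} (f : Fin (m + 1) → V n) :
    T ⊔ span (ZMod 2) (earlier f 0) = T := by
  rw [earlier_zero, span_empty, sup_bot_eq]

lemma sup_span_earlier_succ (T : Submodule (ZMod 2) (V n)) {m : ℕ} (f : Fin (m + 1) → V n)
    (z : Fin m) :
    T ⊔ span (ZMod 2) (earlier f z.succ)
      = (T ⊔ span (ZMod 2) {f 0}) ⊔ span (ZMod 2) (earlier (Fin.tail f) z) := by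
  rw [earlier_succ, Submodule.span_insert, ← sup_assoc]

lemma good_cons_iff (T : Submodule (ZMod 2) (V n)) {m : ℕ} (f : Fin (m + 1) → V n) :
    Good T f ↔ f 0 ∉ T ∧ Good (T ⊔ span (ZMod 2) {f 0}) (Fin.tail f) := by
  constructor
  · intro h
    refine ⟨?_, fun z => ?_⟩
    · have := h 0; rwa [sup_span_earlier_zero] at this
    · have := h z.succ; rwa [sup_span_earlier_succ] at this
  · rintro ⟨h0, h1⟩ z
    induction z using Fin.cases with
    | zero => rwa [sup_span_earlier_zero]
    | succ w => rw [sup_span_earlier_succ]; exact h1 w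

lemma bad_cons_iff (T' : Submodule (ZMod 2) (V n)) {m : ℕ} (f : Fin (m + 1) → V n) :
    Bad T' f ↔ f 0 ∈ T' ∨ Bad (T' ⊔ span (ZMod 2) {f 0}) (Fin.tail f) := by
  constructor
  · rintro ⟨z, hz⟩
    induction z using Fin.cases with
    | zero => left; rwa [sup_span_earlier_zero] at hz
    | succ w => right; exact ⟨w, by rwa [sup_span_earlier_succ] at hz⟩
  · rintro (h | ⟨w, hw⟩)
    · exact ⟨0, by rwa [sup_span_earlier_zero]⟩
    · exact ⟨w.succ, by rwa [sup_span_earlier_succ]⟩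

def consEquiv {m : ℕ} (P : V n → Prop) (Q : V n → (Fin m → V n) → Prop) :
    {f : Fin (m + 1) → V n // P (f 0) ∧ Q (f 0) (Fin.tail f)}
      ≃ Σ v : {v : V n // P v}, {g : Fin m → V n // Q v.1 g} where
  toFun f := ⟨⟨f.1 0, f.2.1⟩, ⟨Fin.tail f.1, f.2.2⟩⟩
  invFun x := ⟨Fin.cons x.1.1 x.2.1, by
    simpa [Fin.tail_cons] using ⟨x.1.2, x.2.2⟩⟩
  left_inv f := Subtype.ext (Fin.cons_self_tail f.1)
  right_inv x := by
    rcases x with ⟨⟨v, hv⟩, ⟨g, hg⟩⟩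
    simp only [Fin.cons_zero, Fin.tail_cons]
    rfl

lemma nat_card_sigma {A : Type*} [Fintype A] (B : A → Type*) [∀ a, Fintype (B a)] :
    Nat.card (Σ a, B a) = ∑ a, Nat.card (B a) := by
  simp [Nat.card_eq_fintype_card]

lemma card_cons {m : ℕ} (P : V n → Prop) (Q : V n → (Fin m → V n) → Prop) :
    Nat.card {f : Fin (m + 1) → V n // P (f 0) ∧ Q (f 0) (Fin.tail f)}
      = ∑ v : {v : V n // P v}, Nat.card {g : Fin m → V n // Q v.1 g} := by
  rw [Nat.card_congr (consEquiv P Q), nat_card_sigma]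

lemma card_subtype_or_disj {α : Type*} [Finite α] (p q : α → Prop)
    (h : ∀ x, p x → q x → False) :
    Nat.card {x // p x ∨ q x} = Nat.card {x // p x} + Nat.card {x // q x} := by
  rw [Nat.card_eq_fintype_card, Nat.card_eq_fintype_card, Nat.card_eq_fintype_card]
  apply Fintype.card_subtype_or_disjoint
  intro r hrp hrq x hx
  exact (h x (hrp x hx) (hrq x hx)).elim

noncomputable def Ng (T : Submodule (ZMod 2) (V n)) (m : ℕ) : ℕ :=
  Nat.card {f : Fin m → V n // Good T f}

noncomputable def Nb (T T' : Submodule (ZMod 2) (V n)) (m : ℕ) : ℕ :=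
  Nat.card {f : Fin m → V n // Good T f ∧ Bad T' f}

lemma card_submodule (T : Submodule (ZMod 2) (V n)) :
    Nat.card T = 2 ^ Module.finrank (ZMod 2) T := by
  rw [Nat.card_eq_fintype_card, Module.card_eq_pow_finrank (K := ZMod 2), ZMod.card]

lemma card_V : Nat.card (V n) = 2 ^ n := by
  simp [Nat.card_eq_fintype_card]

lemma card_notMem (T : Submodule (ZMod 2) (V n)) :
    Nat.card {v : V n // v ∉ T} = 2 ^ n - 2 ^ Module.finrank (ZMod 2) T := by
  have h2 : Fintype.card {v : V n // ¬ v ∈ T}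
      = Fintype.card (V n) - Fintype.card {v : V n // v ∈ T} :=
    Fintype.card_subtype_compl _
  have h3 : Fintype.card {v : V n // v ∈ T} = 2 ^ Module.finrank (ZMod 2) T := by
    rw [← Nat.card_eq_fintype_card]; exact card_submodule T
  have h4 : Fintype.card (V n) = 2 ^ n := by simp
  rw [Nat.card_eq_fintype_card, h2, h3, h4]

lemma zmod2_cases (c : ZMod 2) : c = 0 ∨ c = 1 := by revert c; decide

lemma finrank_sup_singleton (T : Submodule (ZMod 2) (V n)) {v : V n} (hv : v ∉ T) :
    Module.finrank (ZMod 2) ↥(T ⊔ span (ZMod 2) {v}) = Module.finrank (ZMod 2) T + 1 := by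
  have hv0 : v ≠ 0 := fun h => hv (h ▸ T.zero_mem)
  have hinf : T ⊓ span (ZMod 2) {v} = ⊥ := by
    rw [eq_bot_iff]
    rintro x ⟨hxT, hxs⟩
    obtain ⟨c, rfl⟩ := Submodule.mem_span_singleton.mp hxs
    rcases zmod2_cases c with rfl | rfl
    · simp
    · rw [one_smul] at hxT; exact absurd hxT hv
  have h := Submodule.finrank_sup_add_finrank_inf_eq T (span (ZMod 2) {v})
  rw [hinf, finrank_bot, finrank_span_singleton hv0] at h
  omega

lemma prod_shift (d m : ℕ) :
    ∏ j ∈ Finset.range (m + 1), (2 ^ n - 2 ^ (d + j))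
      = (2 ^ n - 2 ^ d) * ∏ j ∈ Finset.range m, (2 ^ n - 2 ^ (d + 1 + j)) := by
  rw [Finset.prod_range_succ', add_zero, mul_comm]
  congr 1
  apply Finset.prod_congr rfl
  intro j _
  congr 2
  omega

lemma card_good (m : ℕ) (T : Submodule (ZMod 2) (V n)) :
    Ng T m = ∏ j ∈ Finset.range m, (2 ^ n - 2 ^ (Module.finrank (ZMod 2) T + j)) := by
  induction m generalizing T with
  | zero =>
    rw [Finset.prod_range_zero]
    show Nat.card {f : Fin 0 → V n // Good T f} = 1
    haveI : Nonempty {f : Fin 0 → V n // Good T f} :=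
      ⟨⟨finZeroElim, fun z => z.elim0⟩⟩
    haveI : Subsingleton {f : Fin 0 → V n // Good T f} :=
      ⟨fun a b => Subtype.ext (funext fun i => i.elim0)⟩
    exact Nat.card_unique
  | succ m ih =>
    have estep : Ng T (m + 1)
        = ∑ v : {v : V n // v ∉ T},
            Nat.card {g : Fin m → V n // Good (T ⊔ span (ZMod 2) {v.1}) g} :=
      (Nat.card_congr (Equiv.subtypeEquivRight (fun f => good_cons_iff T f))).trans
        (card_cons (fun v => v ∉ T) (fun v g => Good (T ⊔ span (ZMod 2) {v}) g))
    have hval : ∀ v : {v : V n // v ∉ T},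
        Nat.card {g : Fin m → V n // Good (T ⊔ span (ZMod 2) {v.1}) g}
          = ∏ j ∈ Finset.range m,
              (2 ^ n - 2 ^ (Module.finrank (ZMod 2) T + 1 + j)) := by
      intro v
      have h := ih (T ⊔ span (ZMod 2) {v.1})
      rw [finrank_sup_singleton T v.2] at h
      exact h
    rw [estep, Finset.sum_congr rfl (fun v _ => hval v), Finset.sum_const, card_univ,
      ← Nat.card_eq_fintype_card, card_notMem, smul_eq_mul, prod_shift]

lemma card_mem_diff (T T' : Submodule (ZMod 2) (V n)) (h : T ≤ T') :
    Nat.card {v : V n // v ∈ T' ∧ v ∉ T}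
      = 2 ^ Module.finrank (ZMod 2) T' - 2 ^ Module.finrank (ZMod 2) T := by
  have e1 : {v : V n // v ∈ T' ∧ v ∉ T} ≃ {x : T' // (x : V n) ∉ T} :=
    ⟨fun v => ⟨⟨v.1, v.2.1⟩, v.2.2⟩, fun x => ⟨x.1.1, x.1.2, x.2⟩,
      fun v => rfl, fun x => rfl⟩
  have e2 : {x : T' // (x : V n) ∈ T} ≃ T :=
    ⟨fun x => ⟨x.1.1, x.2⟩, fun v => ⟨⟨v.1, h v.2⟩, v.2⟩, fun x => rfl, fun v => rfl⟩
  have h2 : Fintype.card {x : T' // ¬ (x : V n) ∈ T}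
      = Fintype.card T' - Fintype.card {x : T' // (x : V n) ∈ T} :=
    Fintype.card_subtype_compl _
  have h3 : Fintype.card {x : T' // (x : V n) ∈ T} = 2 ^ Module.finrank (ZMod 2) T := by
    rw [← Nat.card_eq_fintype_card, Nat.card_congr e2]; exact card_submodule T
  have h4 : Fintype.card ↥T' = 2 ^ Module.finrank (ZMod 2) T' := by
    rw [← Nat.card_eq_fintype_card]; exact card_submodule T'
  rw [Nat.card_congr e1, Nat.card_eq_fintype_card, h2, h3, h4]

lemma arith (a b M N : ℕ) (hab : a ≤ b) (hM : 1 ≤ M) (hN : 2 * (b * M) ≤ N) :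
    N * (b - a) + (N - b) * (2 * b * (M - 1)) ≤ b * (2 * M - 1) * (N - a) := by
  have hbN : b ≤ N := by nlinarith
  have haN : a ≤ N := hab.trans hbN
  have h2M : 1 ≤ 2 * M := by omega
  zify [hab, hM, hbN, haN, h2M]
  have h1 : (0:ℤ) ≤ (M:ℤ) - 1 := by
    have : (1:ℤ) ≤ (M:ℤ) := by exact_mod_cast hM
    omega
  have h2 : (0:ℤ) ≤ (b:ℤ) - a := by
    have : (a:ℤ) ≤ (b:ℤ) := by exact_mod_cast hab
    omega
  have h3 : (0:ℤ) ≤ (N:ℤ) - b := by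
    have : (b:ℤ) ≤ (N:ℤ) := by exact_mod_cast hbN
    omega
  nlinarith [mul_nonneg (mul_nonneg h1 h2) (by positivity : (0:ℤ) ≤ 2 * (b:ℤ)),
    mul_nonneg (by positivity : (0:ℤ) ≤ (a:ℤ)) h3]

lemma card_bad_le (m : ℕ) (T T' : Submodule (ZMod 2) (V n)) (hTT' : T ≤ T')
    (hn : Module.finrank (ZMod 2) T' + m ≤ n) :
    2 ^ n * Nb T T' m
      ≤ 2 ^ Module.finrank (ZMod 2) T' * (2 ^ m - 1) * Ng T m := by
  induction m generalizing T T' with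
  | zero =>
    have : IsEmpty {f : Fin 0 → V n // Good T f ∧ Bad T' f} :=
      ⟨fun f => by obtain ⟨z, -⟩ := f.2.2; exact z.elim0⟩
    have h0 : Nb T T' 0 = 0 := Nat.card_of_isEmpty
    rw [h0]
    simp
  | succ m ih =>
    have hdd'0 : Module.finrank (ZMod 2) T ≤ Module.finrank (ZMod 2) T' :=
      Submodule.finrank_mono hTT'
    obtain ⟨d, hd⟩ : ∃ d, Module.finrank (ZMod 2) T = d := ⟨_, rfl⟩
    obtain ⟨d', hd'⟩ : ∃ d', Module.finrank (ZMod 2) T' = d' := ⟨_, rfl⟩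
    rw [hd, hd'] at hdd'0
    rw [hd'] at hn
    rw [hd']
    obtain ⟨G1, hG1⟩ : ∃ G, ∏ j ∈ Finset.range m, (2 ^ n - 2 ^ (d + 1 + j)) = G := ⟨_, rfl⟩
    have hiff : ∀ f : Fin (m + 1) → V n, (Good T f ∧ Bad T' f)
        ↔ (((f 0 ∈ T' ∧ f 0 ∉ T) ∧ Good (T ⊔ span (ZMod 2) {f 0}) (Fin.tail f))
           ∨ ((f 0 ∉ T') ∧ (Good (T ⊔ span (ZMod 2) {f 0}) (Fin.tail f)
                ∧ Bad (T' ⊔ span (ZMod 2) {f 0}) (Fin.tail f)))) := by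
      intro f
      rw [good_cons_iff, bad_cons_iff]
      constructor
      · rintro ⟨⟨h0, hg⟩, hb⟩
        by_cases hv : f 0 ∈ T'
        · exact Or.inl ⟨⟨hv, h0⟩, hg⟩
        · rcases hb with h | h
          · exact absurd h hv
          · exact Or.inr ⟨hv, hg, h⟩
      · rintro (⟨⟨hv, h0⟩, hg⟩ | ⟨hv, hg, hb⟩)
        · exact ⟨⟨h0, hg⟩, Or.inl hv⟩
        · exact ⟨⟨fun hT => hv (hTT' hT), hg⟩, Or.inr hb⟩
    have esplit : Nb T T' (m + 1)
        = Nat.card {f : Fin (m + 1) → V n //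
            (f 0 ∈ T' ∧ f 0 ∉ T) ∧ Good (T ⊔ span (ZMod 2) {f 0}) (Fin.tail f)}
          + Nat.card {f : Fin (m + 1) → V n //
            (f 0 ∉ T') ∧ (Good (T ⊔ span (ZMod 2) {f 0}) (Fin.tail f)
              ∧ Bad (T' ⊔ span (ZMod 2) {f 0}) (Fin.tail f))} :=
      (Nat.card_congr (Equiv.subtypeEquivRight hiff)).trans
        (card_subtype_or_disj _ _ (fun f h1 h2 => h2.1 h1.1.1))
    have hpart1 : Nat.card {f : Fin (m + 1) → V n //
          (f 0 ∈ T' ∧ f 0 ∉ T) ∧ Good (T ⊔ span (ZMod 2) {f 0}) (Fin.tail f)}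
        = (2 ^ d' - 2 ^ d) * G1 := by
      rw [card_cons (fun v => v ∈ T' ∧ v ∉ T) (fun v g => Good (T ⊔ span (ZMod 2) {v}) g)]
      have hval : ∀ v : {v : V n // v ∈ T' ∧ v ∉ T},
          Nat.card {g : Fin m → V n // Good (T ⊔ span (ZMod 2) {v.1}) g} = G1 := by
        intro v
        have h := card_good m (T ⊔ span (ZMod 2) {v.1})
        rw [finrank_sup_singleton T v.2.2, hd, hG1] at h
        exact h
      rw [Finset.sum_congr rfl (fun v _ => hval v), Finset.sum_const, card_univ,
        ← Nat.card_eq_fintype_card, card_mem_diff T T' hTT', hd, hd', smul_eq_mul]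
    have hpart2 : Nat.card {f : Fin (m + 1) → V n //
          (f 0 ∉ T') ∧ (Good (T ⊔ span (ZMod 2) {f 0}) (Fin.tail f)
            ∧ Bad (T' ⊔ span (ZMod 2) {f 0}) (Fin.tail f))}
        = ∑ v : {v : V n // v ∉ T'},
            Nat.card {g : Fin m → V n // Good (T ⊔ span (ZMod 2) {v.1}) g
              ∧ Bad (T' ⊔ span (ZMod 2) {v.1}) g} :=
      card_cons (fun v => v ∉ T')
        (fun v g => Good (T ⊔ span (ZMod 2) {v}) g ∧ Bad (T' ⊔ span (ZMod 2) {v}) g)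
    have hIH : ∀ v : {v : V n // v ∉ T'},
        2 ^ n * Nat.card {g : Fin m → V n // Good (T ⊔ span (ZMod 2) {v.1}) g
            ∧ Bad (T' ⊔ span (ZMod 2) {v.1}) g}
          ≤ 2 ^ (d' + 1) * (2 ^ m - 1) * G1 := by
      intro v
      have hvT : v.1 ∉ T := fun hT => v.2 (hTT' hT)
      have h1 : T ⊔ span (ZMod 2) {v.1} ≤ T' ⊔ span (ZMod 2) {v.1} :=
        sup_le_sup_right hTT' _
      have h2 : Module.finrank (ZMod 2) ↥(T' ⊔ span (ZMod 2) {v.1}) = d' + 1 := by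
        rw [finrank_sup_singleton T' v.2, hd']
      have h3 : Module.finrank (ZMod 2) ↥(T ⊔ span (ZMod 2) {v.1}) = d + 1 := by
        rw [finrank_sup_singleton T hvT, hd]
      have h4 := ih (T ⊔ span (ZMod 2) {v.1}) (T' ⊔ span (ZMod 2) {v.1}) h1
        (by rw [h2, Nat.add_assoc, Nat.add_comm 1 m]; exact hn)
      rw [h2, card_good m, h3, hG1] at h4
      exact h4
    have hkey : 2 ^ n * ((2 ^ d' - 2 ^ d) * G1)
          + (2 ^ n - 2 ^ d') * (2 ^ (d' + 1) * (2 ^ m - 1) * G1)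
        ≤ 2 ^ d' * (2 * 2 ^ m - 1) * ((2 ^ n - 2 ^ d) * G1) := by
      have ha := arith (2 ^ d) (2 ^ d') (2 ^ m) (2 ^ n)
        (Nat.pow_le_pow_right (by norm_num) hdd'0)
        (Nat.one_le_two_pow)
        (by calc 2 * (2 ^ d' * 2 ^ m) = 2 ^ (d' + m + 1) := by ring
              _ ≤ 2 ^ n := Nat.pow_le_pow_right (by norm_num)
                (by rw [Nat.add_assoc]; exact hn))
      calc 2 ^ n * ((2 ^ d' - 2 ^ d) * G1)
            + (2 ^ n - 2 ^ d') * (2 ^ (d' + 1) * (2 ^ m - 1) * G1)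
          = (2 ^ n * (2 ^ d' - 2 ^ d)
              + (2 ^ n - 2 ^ d') * (2 * 2 ^ d' * (2 ^ m - 1))) * G1 := by ring
        _ ≤ (2 ^ d' * (2 * 2 ^ m - 1) * (2 ^ n - 2 ^ d)) * G1 :=
            Nat.mul_le_mul_right G1 ha
        _ = 2 ^ d' * (2 * 2 ^ m - 1) * ((2 ^ n - 2 ^ d) * G1) := by ring
    have hpow2 : (2:ℕ) ^ (m + 1) = 2 * 2 ^ m := by rw [pow_succ]; ring
    calc 2 ^ n * Nb T T' (m + 1)
        = 2 ^ n * ((2 ^ d' - 2 ^ d) * G1)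
          + ∑ v : {v : V n // v ∉ T'},
              2 ^ n * Nat.card {g : Fin m → V n // Good (T ⊔ span (ZMod 2) {v.1}) g
                ∧ Bad (T' ⊔ span (ZMod 2) {v.1}) g} := by
          rw [esplit, hpart1, hpart2, Nat.mul_add, Finset.mul_sum]
      _ ≤ 2 ^ n * ((2 ^ d' - 2 ^ d) * G1)
          + (2 ^ n - 2 ^ d') * (2 ^ (d' + 1) * (2 ^ m - 1) * G1) := by
          gcongr
          calc (∑ v : {v : V n // v ∉ T'},
                2 ^ n * Nat.card {g : Fin m → V n // Good (T ⊔ span (ZMod 2) {v.1}) g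
                  ∧ Bad (T' ⊔ span (ZMod 2) {v.1}) g})
              ≤ ∑ _v : {v : V n // v ∉ T'}, 2 ^ (d' + 1) * (2 ^ m - 1) * G1 :=
                Finset.sum_le_sum (fun v _ => hIH v)
            _ = Nat.card {v : V n // v ∉ T'} * (2 ^ (d' + 1) * (2 ^ m - 1) * G1) := by
                rw [Finset.sum_const, card_univ, ← Nat.card_eq_fintype_card, smul_eq_mul]
            _ ≤ (2 ^ n - 2 ^ d') * (2 ^ (d' + 1) * (2 ^ m - 1) * G1) := by
                rw [card_notMem, hd']
      _ ≤ 2 ^ d' * (2 * 2 ^ m - 1) * ((2 ^ n - 2 ^ d) * G1) := hkey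
      _ = 2 ^ d' * (2 ^ (m + 1) - 1) * Ng T (m + 1) := by
          rw [card_good (m + 1), hd, prod_shift, hG1, hpow2]

lemma bad_of_inter (S' : Submodule (ZMod 2) (V n)) {m : ℕ} (f : Fin m → V n)
    (h : span (ZMod 2) (Set.range f) ⊓ S' ≠ ⊥) : Bad S' f := by
  obtain ⟨w, hw, hw0⟩ := (Submodule.ne_bot_iff _).mp h
  obtain ⟨hw1, hw2⟩ := Submodule.mem_inf.mp hw
  obtain ⟨c, hc⟩ := (mem_span_range_iff_exists_fun (ZMod 2)).mp hw1
  set A := Finset.univ.filter (fun i => c i ≠ 0) with hA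
  have hsumA : ∑ i ∈ A, c i • f i = w := by
    rw [← hc]
    apply Finset.sum_subset (Finset.subset_univ A)
    intro i _ hi
    rw [hA, Finset.mem_filter] at hi
    have : c i = 0 := by by_contra h'; exact hi ⟨Finset.mem_univ i, h'⟩
    simp [this]
  have hAne : A.Nonempty := by
    by_contra h'
    rw [Finset.not_nonempty_iff_eq_empty] at h'
    rw [h', Finset.sum_empty] at hsumA
    exact hw0 hsumA.symm
  set z := A.max' hAne with hz
  refine ⟨z, ?_⟩
  have hzA : z ∈ A := A.max'_mem hAne
  have hsum2 : f z + ∑ i ∈ A.erase z, c i • f i = w := by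
    have hcz : c z = 1 := by
      rcases zmod2_cases (c z) with h' | h'
      · exfalso; rw [hA, Finset.mem_filter] at hzA; exact hzA.2 h'
      · exact h'
    rw [← hsumA, ← Finset.add_sum_erase A (fun i => c i • f i) hzA, hcz, one_smul]
  have hrest : ∑ i ∈ A.erase z, c i • f i ∈ span (ZMod 2) (earlier f z) := by
    apply Submodule.sum_mem
    intro i hi
    have hiz : i ≠ z := Finset.ne_of_mem_erase hi
    have hiA : i ∈ A := Finset.mem_of_mem_erase hi
    have hilt : i < z := lt_of_le_of_ne (A.le_max' i hiA) hiz
    exact Submodule.smul_mem _ _ (Submodule.subset_span ⟨i, hilt, rfl⟩)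
  have hfz : f z = w - ∑ i ∈ A.erase z, c i • f i := by
    rw [← hsum2]; ring
  rw [hfz]
  exact Submodule.sub_mem _ (Submodule.mem_sup_left hw2)
    (Submodule.mem_sup_right hrest)

end Stmt9

/-- Let `S ⊆ S' ⊆ Z_2^n` with `dim S = r`, `dim S' = r+ℓ`, `ℓ ≥ 1`,
`r + s + ℓ ≤ n`. Sampling `v_1, …, v_s` sequentially with `v_z` uniform in
`Z_2^n \ span(S ∪ {v_1,…,v_{z−1}})` gives the uniform distribution on tuples with
`v_z ∉ span(S, v_1, …, v_{z−1})` for all `z`; the probability that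
`span(v_1,…,v_s) ∩ S' ≠ {0}` is less than `2^{−(n−ℓ−r−s)}`. -/
theorem stmt9 (n r ℓ s : ℕ) (hℓ : 1 ≤ ℓ) (hsum : r + s + ℓ ≤ n)
    (S S' : Submodule (ZMod 2) (Fin n → ZMod 2)) (hSS' : S ≤ S')
    (hS : Module.finrank (ZMod 2) S = r) (hS' : Module.finrank (ZMod 2) S' = r + ℓ) :
    (Nat.card {f : Fin s → (Fin n → ZMod 2) //
        (∀ z : Fin s, f z ∉ S ⊔ Submodule.span (ZMod 2) {x | ∃ i : Fin s, i < z ∧ f i = x}) ∧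
          Submodule.span (ZMod 2) (Set.range f) ⊓ S' ≠ ⊥} : ℝ) /
      (Nat.card {f : Fin s → (Fin n → ZMod 2) //
        ∀ z : Fin s, f z ∉ S ⊔ Submodule.span (ZMod 2) {x | ∃ i : Fin s, i < z ∧ f i = x}} : ℝ)
      < (2 : ℝ) ^ (ℓ + r + s) / (2 : ℝ) ^ n := by
  classical
  have hNb : 2 ^ n * Stmt9.Nb S S' s ≤ 2 ^ (r + ℓ) * (2 ^ s - 1) * Stmt9.Ng S s := by
    have h := Stmt9.card_bad_le s S S' hSS' (by rw [hS']; omega)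
    rwa [hS'] at h
  have hNg_pos : 0 < Stmt9.Ng S s := by
    rw [Stmt9.card_good, hS]
    apply Finset.prod_pos
    intro j hj
    rw [Finset.mem_range] at hj
    exact Nat.sub_pos_of_lt (Nat.pow_lt_pow_right (by norm_num) (by omega))
  have hlt : 2 ^ (r + ℓ) * (2 ^ s - 1) * Stmt9.Ng S s
      < 2 ^ (ℓ + r + s) * Stmt9.Ng S s := by
    have hpw : (2:ℕ) ^ (ℓ + r + s) = 2 ^ (r + ℓ) * 2 ^ s := by
      rw [← pow_add, Nat.add_comm ℓ r, Nat.add_assoc]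
    rw [hpw]
    exact mul_lt_mul_of_pos_right
      (mul_lt_mul_of_pos_left (Nat.sub_lt (pow_pos (by norm_num) s) one_pos)
        (pow_pos (by norm_num) (r + ℓ))) hNg_pos
  have hA : Nat.card {f : Fin s → (Fin n → ZMod 2) //
      (∀ z : Fin s, f z ∉ S ⊔ Submodule.span (ZMod 2) {x | ∃ i : Fin s, i < z ∧ f i = x}) ∧
        Submodule.span (ZMod 2) (Set.range f) ⊓ S' ≠ ⊥} ≤ Stmt9.Nb S S' s := by
    apply Nat.card_le_card_of_injective
      (fun x : {f : Fin s → (Fin n → ZMod 2) //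
          (∀ z : Fin s, f z ∉ S ⊔ Submodule.span (ZMod 2) {x | ∃ i : Fin s, i < z ∧ f i = x}) ∧
            Submodule.span (ZMod 2) (Set.range f) ⊓ S' ≠ ⊥} =>
        (⟨x.1, x.2.1, Stmt9.bad_of_inter S' x.1 x.2.2⟩ :
          {f : Fin s → (Fin n → ZMod 2) // Stmt9.Good S f ∧ Stmt9.Bad S' f}))
    intro a b hab
    have h1 := Subtype.ext_iff.mp hab
    exact Subtype.ext h1
  have hB : Nat.card {f : Fin s → (Fin n → ZMod 2) //
      ∀ z : Fin s, f z ∉ S ⊔ Submodule.span (ZMod 2) {x | ∃ i : Fin s, i < z ∧ f i = x}}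
      = Stmt9.Ng S s :=
    Nat.card_congr (Equiv.subtypeEquivRight (fun f => Iff.rfl))
  have hmain : 2 ^ n * Nat.card {f : Fin s → (Fin n → ZMod 2) //
      (∀ z : Fin s, f z ∉ S ⊔ Submodule.span (ZMod 2) {x | ∃ i : Fin s, i < z ∧ f i = x}) ∧
        Submodule.span (ZMod 2) (Set.range f) ⊓ S' ≠ ⊥}
      < 2 ^ (ℓ + r + s) * Nat.card {f : Fin s → (Fin n → ZMod 2) //
      ∀ z : Fin s, f z ∉ S ⊔ Submodule.span (ZMod 2) {x | ∃ i : Fin s, i < z ∧ f i = x}} := by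
    rw [hB]
    calc 2 ^ n * Nat.card {f : Fin s → (Fin n → ZMod 2) //
        (∀ z : Fin s, f z ∉ S ⊔ Submodule.span (ZMod 2) {x | ∃ i : Fin s, i < z ∧ f i = x}) ∧
          Submodule.span (ZMod 2) (Set.range f) ⊓ S' ≠ ⊥}
        ≤ 2 ^ n * Stmt9.Nb S S' s := Nat.mul_le_mul_left _ hA
      _ ≤ 2 ^ (r + ℓ) * (2 ^ s - 1) * Stmt9.Ng S s := hNb
      _ < 2 ^ (ℓ + r + s) * Stmt9.Ng S s := hlt
  have hdpos : 0 < Nat.card {f : Fin s → (Fin n → ZMod 2) //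
      ∀ z : Fin s, f z ∉ S ⊔ Submodule.span (ZMod 2) {x | ∃ i : Fin s, i < z ∧ f i = x}} := by
    rw [hB]; exact hNg_pos
  rw [div_lt_div_iff₀ (by exact_mod_cast hdpos) (by positivity)]
  calc (Nat.card {f : Fin s → (Fin n → ZMod 2) //
        (∀ z : Fin s, f z ∉ S ⊔ Submodule.span (ZMod 2) {x | ∃ i : Fin s, i < z ∧ f i = x}) ∧
          Submodule.span (ZMod 2) (Set.range f) ⊓ S' ≠ ⊥} : ℝ) * 2 ^ n
      = ((2 ^ n * Nat.card {f : Fin s → (Fin n → ZMod 2) //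
        (∀ z : Fin s, f z ∉ S ⊔ Submodule.span (ZMod 2) {x | ∃ i : Fin s, i < z ∧ f i = x}) ∧
          Submodule.span (ZMod 2) (Set.range f) ⊓ S' ≠ ⊥} : ℕ) : ℝ) := by push_cast; ring
    _ < ((2 ^ (ℓ + r + s) * Nat.card {f : Fin s → (Fin n → ZMod 2) //
        ∀ z : Fin s, f z ∉ S ⊔ Submodule.span (ZMod 2) {x | ∃ i : Fin s, i < z ∧ f i = x}} : ℕ) : ℝ) := by
        exact_mod_cast hmain
    _ = (2 : ℝ) ^ (ℓ + r + s) * (Nat.card {f : Fin s → (Fin n → ZMod 2) //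
        ∀ z : Fin s, f z ∉ S ⊔ Submodule.span (ZMod 2) {x | ∃ i : Fin s, i < z ∧ f i = x}} : ℝ) := by
        push_cast; ring
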